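/- If moreover λ is graded-cocommutative (τλ = (-1)^{|λ|}λ) in a unital coFrobenius bialgebra, then β = (1⊗μ⊗1)(c⊗c) additionally satisfies τ₁₂ β = (-1)^{|λ|} β, where τ₁₂ transposes the first two factors with Koszul sign; thus β : R → A⊗A⊗A is S₃-equivariant for the sign representation if |λ| is odd and the trivial representation if |λ| is even. -/

import Mathlib

open TensorProduct LinearMap
open scoped TensorProduct DirectSum

namespace GradedCoFrob

variable {R : Type} [CommRing R] {M : Type} [AddCommGroup M] [Module R M]


/-- The Koszul sign `(-1)^n` for `n : ℤ`. -/
def ksign (n : ℤ) : ℤ := (((-1 : ℤˣ) ^ n : ℤˣ) : ℤ)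

variable (𝒜 : ℤ → Submodule R M) [DirectSum.Decomposition 𝒜]

/-- Build a linear map `M →ₗ N` out of its values on the homogeneous pieces,
bundled linearly in the family of values. -/
noncomputable def fromPiecesHom {N : Type} [AddCommGroup N] [Module R N] :
    (∀ i : ℤ, 𝒜 i →ₗ[R] N) →ₗ[R] (M →ₗ[R] N) :=
  (LinearMap.lcomp R N (DirectSum.decomposeLinearEquiv 𝒜).toLinearMap).comp
    (DFinsupp.lsum R (M := fun i => 𝒜 i) (N := N)).toLinearMap

/-- Build a linear map `M →ₗ N` out of its values on the homogeneous pieces. -/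
noncomputable def fromPieces {N : Type} [AddCommGroup N] [Module R N]
    (f : ∀ i : ℤ, 𝒜 i →ₗ[R] N) : M →ₗ[R] N :=
  fromPiecesHom 𝒜 f

/-- Build a bilinear map `M →ₗ M →ₗ N` out of its values on pairs of homogeneous pieces. -/
noncomputable def fromPieces₂ {N : Type} [AddCommGroup N] [Module R N]
    (f : ∀ i j : ℤ, 𝒜 i →ₗ[R] 𝒜 j →ₗ[R] N) : M →ₗ[R] M →ₗ[R] N :=
  fromPieces 𝒜 (fun i => (fromPiecesHom 𝒜).comp (LinearMap.pi (fun j => f i j)))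

/-- The operator multiplying the degree `i` component by the Koszul sign `(-1)^(d*i)`. -/
noncomputable def signAction (d : ℤ) : M →ₗ[R] M :=
  fromPieces 𝒜 (fun i => ksign (d * i) • (𝒜 i).subtype)

/-- The Koszul twist `τ(a ⊗ b) = (-1)^{|a||b|} b ⊗ a`. -/
noncomputable def twist : M ⊗[R] M →ₗ[R] M ⊗[R] M :=
  TensorProduct.lift (fromPieces₂ 𝒜 (fun i j =>
    ksign (i * j) • ((((TensorProduct.mk R M M).flip).comp (𝒜 i).subtype).compl₂
      (𝒜 j).subtype)))

/-- Left contraction `(f ⊗ 1)(x ⊗ y) = f(x) • y` (no Koszul sign since `1` has degree `0`). -/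
noncomputable def contrL {N : Type} [AddCommGroup N] [Module R N]
    (f : N →ₗ[R] R) : N ⊗[R] M →ₗ[R] M :=
  TensorProduct.lift ((LinearMap.lsmul R M).comp f)

/-- Right contraction with Koszul sign:
`(1 ⊗ f)(x ⊗ y) = (-1)^{d|x|} f(y) • x` where `d` is the degree of `f`. -/
noncomputable def contrR {N : Type} [AddCommGroup N] [Module R N]
    (f : N →ₗ[R] R) (d : ℤ) : M ⊗[R] N →ₗ[R] M :=
  TensorProduct.lift ((((LinearMap.lsmul R M).comp f).flip).comp (signAction 𝒜 d))

/-- Koszul-signed evaluation of a pair of functionals on a tensor: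
`(x ⊗ y) ↦ f((-1)^{d₁|x|} x) * g((-1)^{d₂|y|} y)`. -/
noncomputable def ev2 (f g : M →ₗ[R] R) (d₁ d₂ : ℤ) : M ⊗[R] M →ₗ[R] R :=
  TensorProduct.lift (((LinearMap.mul R R).comp (f.comp (signAction 𝒜 d₁))).compl₂
    (g.comp (signAction 𝒜 d₂)))

/-- The map `c⃗ : A^∨ → A`, `f ↦ (-1)^{|f||c|}(f ⊗ 1)c`, implemented by putting the sign
`(-1)^{dc |x|}` on the first tensor factor of the copairing `c` (of degree `dc`). -/
noncomputable def cvec (c : M ⊗[R] M) (dc : ℤ) : (M →ₗ[R] R) →ₗ[R] M :=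
  (LinearMap.applyₗ ((LinearMap.rTensor M (signAction 𝒜 dc)) c)).comp
    ((TensorProduct.lift.equiv (RingHom.id R) M M M).toLinearMap.comp
      (LinearMap.llcomp R M R (M →ₗ[R] M) (LinearMap.lsmul R M)))

/-- The operation `(1 ⊗ c ⊗ 1) : A ⊗ A → (A ⊗ A) ⊗ (A ⊗ A)`,
`a ⊗ b ↦ (-1)^{|c||a|} (a ⊗ c₁) ⊗ (c₂ ⊗ b)` for a copairing `c` of degree `dc`. -/
noncomputable def midIns (c : M ⊗[R] M) (dc : ℤ) :
    M ⊗[R] M →ₗ[R] (M ⊗[R] M) ⊗[R] (M ⊗[R] M) :=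
  (TensorProduct.assoc R (M ⊗[R] M) M M).toLinearMap.comp
    (LinearMap.rTensor M
      (((TensorProduct.assoc R M M M).symm.toLinearMap).comp
        (((TensorProduct.mk R M (M ⊗[R] M)).flip c).comp (signAction 𝒜 dc))))

/-- The Koszul-signed cyclic permutation `σ(a⊗b⊗c) = (-1)^{(|a|+|b|)|c|} c⊗a⊗b`. -/
noncomputable def cyc : (M ⊗[R] M) ⊗[R] M →ₗ[R] (M ⊗[R] M) ⊗[R] M :=
  (LinearMap.rTensor M (twist 𝒜)).comp
    ((TensorProduct.assoc R M M M).symm.toLinearMap.comp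
      ((LinearMap.lTensor M (twist 𝒜)).comp (TensorProduct.assoc R M M M).toLinearMap))

/-- The submodule `A_i ⊗ A_j ⊆ A ⊗ A`. -/
noncomputable def tpiece (i j : ℤ) : Submodule R (M ⊗[R] M) :=
  LinearMap.range (TensorProduct.map (𝒜 i).subtype (𝒜 j).subtype)

/-- The degree `k` part `⨁_{i+j=k} A_i ⊗ A_j` of `A ⊗ A`. -/
noncomputable def tgrade (k : ℤ) : Submodule R (M ⊗[R] M) :=
  ⨆ i : ℤ, tpiece 𝒜 i (k - i)

/-- A product is homogeneous of degree `d`. -/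
def IsHomogProd (d : ℤ) (mu : M ⊗[R] M →ₗ[R] M) : Prop :=
  ∀ i j : ℤ, ∀ x ∈ 𝒜 i, ∀ y ∈ 𝒜 j, mu (x ⊗ₜ[R] y) ∈ 𝒜 (i + j + d)

/-- A coproduct is homogeneous of degree `d`. -/
def IsHomogCoprod (d : ℤ) (lam : M →ₗ[R] M ⊗[R] M) : Prop :=
  ∀ k : ℤ, ∀ x ∈ 𝒜 k, lam x ∈ tgrade 𝒜 (k + d)

/-- A scalar-valued functional is homogeneous of degree `d`. -/
def IsHomogFun (d : ℤ) (f : M →ₗ[R] R) : Prop :=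
  ∀ i : ℤ, i ≠ -d → ∀ x ∈ 𝒜 i, f x = 0

/-- A pairing is homogeneous of degree `d`. -/
def IsHomogPairing (d : ℤ) (p : M ⊗[R] M →ₗ[R] R) : Prop :=
  ∀ i j : ℤ, i + j ≠ -d → ∀ x ∈ 𝒜 i, ∀ y ∈ 𝒜 j, p (x ⊗ₜ[R] y) = 0

end GradedCoFrob
namespace GradedCoFrob

/-- A unital coFrobenius bialgebra structure on a ℤ-graded module
(Definition `defi:coFrobenius-unital-bialgebra`), with all Koszul sign conventions explicit. -/
structure UnitalCoFrob (R : Type) [CommRing R] {M : Type} [AddCommGroup M] [Module R M]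
    (𝒜 : ℤ → Submodule R M) [DirectSum.Decomposition 𝒜] where
  mu : M ⊗[R] M →ₗ[R] M
  lam : M →ₗ[R] M ⊗[R] M
  unit : M
  dm : ℤ
  dl : ℤ
  mu_homog : IsHomogProd 𝒜 dm mu
  lam_homog : IsHomogCoprod 𝒜 dl lam
  unit_homog : unit ∈ 𝒜 (-dm)
  /-- graded associativity `μ(μ⊗1) = (-1)^{|μ|} μ(1⊗μ)` -/
  mu_assoc : mu.comp (LinearMap.rTensor M mu) =
    ksign dm • (mu.comp ((TensorProduct.map (signAction 𝒜 dm) mu).comp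
      (TensorProduct.assoc R M M M).toLinearMap))
  /-- `(-1)^{|μ|} μ(η ⊗ 1) = 1` -/
  unit_left : ksign dm • (mu.comp ((TensorProduct.mk R M M) unit)) = LinearMap.id
  /-- `μ(1 ⊗ η) = 1` -/
  unit_right : mu.comp (((TensorProduct.mk R M M).flip unit).comp (signAction 𝒜 (-dm))) =
    LinearMap.id
  cop : M ⊗[R] M
  /-- the copairing `c = (-1)^{|λ||μ|+|μ|} λη` -/
  cop_def : cop = ksign (dl * dm + dm) • lam unit
  /-- `λ = (1⊗μ)(c⊗1)` -/
  cofrob_left : lam = (TensorProduct.map (signAction 𝒜 dm) mu).comp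
    ((TensorProduct.assoc R M M M).toLinearMap.comp (TensorProduct.mk R (M ⊗[R] M) M cop))
  /-- `λ = (-1)^{|μ|}(μ⊗1)(1⊗c)` -/
  cofrob_right : lam = ksign dm • ((LinearMap.rTensor M mu).comp
    ((TensorProduct.assoc R M M M).symm.toLinearMap.comp
      (((TensorProduct.mk R M (M ⊗[R] M)).flip cop).comp (signAction 𝒜 (dl - dm)))))
  /-- `τc = (-1)^{|λ|} c` -/
  cop_symm : twist 𝒜 cop = ksign dl • cop

/-- A biunital coFrobenius bialgebra structure on a ℤ-graded module
(Definition `defi:biunital-coFrobenius-bialgebra`), with all Koszul sign conventions explicit. -/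
structure BiunitalCoFrob (R : Type) [CommRing R] {M : Type} [AddCommGroup M] [Module R M]
    (𝒜 : ℤ → Submodule R M) [DirectSum.Decomposition 𝒜] where
  mu : M ⊗[R] M →ₗ[R] M
  lam : M →ₗ[R] M ⊗[R] M
  unit : M
  counit : M →ₗ[R] R
  dm : ℤ
  dl : ℤ
  mu_homog : IsHomogProd 𝒜 dm mu
  lam_homog : IsHomogCoprod 𝒜 dl lam
  unit_homog : unit ∈ 𝒜 (-dm)
  counit_homog : IsHomogFun 𝒜 (-dl) counit
  mu_assoc : mu.comp (LinearMap.rTensor M mu) =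
    ksign dm • (mu.comp ((TensorProduct.map (signAction 𝒜 dm) mu).comp
      (TensorProduct.assoc R M M M).toLinearMap))
  /-- graded coassociativity `(λ⊗1)λ = (-1)^{|λ|}(1⊗λ)λ` -/
  lam_coassoc : (LinearMap.rTensor M lam).comp lam =
    ksign dl • ((TensorProduct.assoc R M M M).symm.toLinearMap.comp
      ((TensorProduct.map (signAction 𝒜 dl) lam).comp lam))
  unit_left : ksign dm • (mu.comp ((TensorProduct.mk R M M) unit)) = LinearMap.id
  unit_right : mu.comp (((TensorProduct.mk R M M).flip unit).comp (signAction 𝒜 (-dm))) =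
    LinearMap.id
  /-- `(ε⊗1)λ = 1` -/
  counit_left : (contrL counit).comp lam = LinearMap.id
  /-- `(-1)^{|λ|}(1⊗ε)λ = 1` -/
  counit_right : ksign dl • ((contrR 𝒜 counit (-dl)).comp lam) = LinearMap.id
  cop : M ⊗[R] M
  cop_def : cop = ksign (dl * dm + dm) • lam unit
  pr : M ⊗[R] M →ₗ[R] R
  /-- the pairing `p = (-1)^{|λ|} εμ` -/
  pr_def : pr = ksign dl • (counit.comp mu)
  cofrob_left : lam = (TensorProduct.map (signAction 𝒜 dm) mu).comp
    ((TensorProduct.assoc R M M M).toLinearMap.comp (TensorProduct.mk R (M ⊗[R] M) M cop))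
  cofrob_right : lam = ksign dm • ((LinearMap.rTensor M mu).comp
    ((TensorProduct.assoc R M M M).symm.toLinearMap.comp
      (((TensorProduct.mk R M (M ⊗[R] M)).flip cop).comp (signAction 𝒜 (dl - dm)))))
  /-- `μ = (-1)^{|μ||λ|+|λ|}(p⊗1)(1⊗λ)` -/
  cofrob_pr_left : mu = ksign (dm * dl + dl) • ((contrL pr).comp
    ((TensorProduct.assoc R M M M).symm.toLinearMap.comp
      (TensorProduct.map (signAction 𝒜 dl) lam)))
  /-- `μ = (-1)^{|μ||λ|}(1⊗p)(λ⊗1)` -/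
  cofrob_pr_right : mu = ksign (dm * dl) • ((contrR 𝒜 pr (dm - dl)).comp
    ((TensorProduct.assoc R M M M).toLinearMap.comp (LinearMap.rTensor M lam)))
  cop_symm : twist 𝒜 cop = ksign dl • cop
  /-- `pτ = (-1)^{|μ|} p` -/
  pr_symm : pr.comp (twist 𝒜) = ksign dm • pr

end GradedCoFrob

/-!
By the left coFrobenius relation `β = (λ ⊗ 1) c`, so `τ₁₂ β = ((τ λ) ⊗ 1) c = (-1)^{|λ|} β` by
cocommutativity. For `σ β = β`, Koszul naturality of the cyclic permutation gives
`σ (λ ⊗ 1) c = (1 ⊗ λ)(s ⊗ 1)(τ c)`, with `s` the sign operator of degree `|λ|`, and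
`τ c = (-1)^{|λ|} c`; evaluating `(1 ⊗ μ ⊗ 1)(c ⊗ c)` with the right coFrobenius relation
instead gives `β = (-1)^{|λ|} (1 ⊗ λ)(s ⊗ 1) c`.
-/

namespace GradedCoFrob

lemma ksign_add (m n : ℤ) : ksign (m + n) = ksign m * ksign n := by
  unfold ksign; rw [← Units.val_mul, ← zpow_add]

lemma ksign_mul_self (n : ℤ) : ksign n * ksign n = 1 := by
  unfold ksign; rw [← Units.val_mul, Int.units_mul_self]; rfl

lemma ksign_eq_of_even_sub {m n : ℤ} (h : Even (m - n)) : ksign m = ksign n := by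
  obtain ⟨k, hk⟩ := h
  rw [show m = n + (k + k) by omega, ksign_add, ksign_add, ksign_mul_self, mul_one]

lemma ksign_self_mul (n : ℤ) : ksign (n * n) = ksign n :=
  ksign_eq_of_even_sub (by simpa [mul_sub] using Int.even_mul_pred_self n)

lemma ksign_smul_ksign_smul {α : Type*} [MulAction ℤ α] (m n : ℤ) (x : α) :
    ksign m • ksign n • x = ksign (m + n) • x := by
  rw [smul_smul, ← ksign_add]

variable {R : Type} [CommRing R] {M : Type} [AddCommGroup M] [Module R M]

lemma _root_.TensorProduct.tmul_zsmul {N : Type} [AddCommGroup N] [Module R N]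
    (x : M) (n : ℤ) (y : N) : x ⊗ₜ[R] (n • y) = n • (x ⊗ₜ[R] y) :=
  map_zsmul (TensorProduct.mk R M N x) n y

lemma _root_.TensorProduct.zsmul_tmul {N : Type} [AddCommGroup N] [Module R N]
    (n : ℤ) (x : M) (y : N) : (n • x) ⊗ₜ[R] y = n • (x ⊗ₜ[R] y) :=
  map_zsmul ((TensorProduct.mk R M N).flip y) n x

variable (𝒜 : ℤ → Submodule R M) [DirectSum.Decomposition 𝒜]

lemma fromPieces_apply {N : Type} [AddCommGroup N] [Module R N]
    (f : ∀ i : ℤ, 𝒜 i →ₗ[R] N) {i : ℤ} (x : 𝒜 i) :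
    fromPieces 𝒜 f (x : M) = f i x := by
  simp only [fromPieces, fromPiecesHom, LinearMap.comp_apply, LinearMap.lcomp_apply,
    LinearEquiv.coe_coe, DirectSum.decomposeLinearEquiv_apply, DirectSum.decompose_coe]
  exact DFinsupp.lsum_single (S := R) f i x

lemma fromPieces₂_apply {N : Type} [AddCommGroup N] [Module R N]
    (f : ∀ i j : ℤ, 𝒜 i →ₗ[R] 𝒜 j →ₗ[R] N) {i j : ℤ} (x : 𝒜 i) (y : 𝒜 j) :
    fromPieces₂ 𝒜 f (x : M) (y : M) = f i j x y := by
  rw [fromPieces₂, fromPieces_apply]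
  exact fromPieces_apply 𝒜 (fun j => f i j x) y

lemma signAction_of_mem {d i : ℤ} {x : M} (hx : x ∈ 𝒜 i) :
    signAction 𝒜 d x = ksign (d * i) • x := by
  simpa [signAction] using fromPieces_apply 𝒜 (fun i => ksign (d * i) • (𝒜 i).subtype) ⟨x, hx⟩

lemma signAction_signAction (d : ℤ) (x : M) :
    signAction 𝒜 d (signAction 𝒜 d x) = x := by
  induction x using DirectSum.Decomposition.inductionOn 𝒜 with
  | zero => simp
  | homogeneous m =>
    rw [signAction_of_mem 𝒜 m.2, map_zsmul, signAction_of_mem 𝒜 m.2, smul_smul,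
      ksign_mul_self, one_smul]
  | add x y hx hy => rw [map_add, map_add, hx, hy]

lemma twist_tmul {i j : ℤ} {x y : M} (hx : x ∈ 𝒜 i) (hy : y ∈ 𝒜 j) :
    twist 𝒜 (x ⊗ₜ[R] y) = ksign (i * j) • (y ⊗ₜ[R] x) := by
  rw [twist, TensorProduct.lift.tmul,
    show x = ((⟨x, hx⟩ : 𝒜 i) : M) from rfl, show y = ((⟨y, hy⟩ : 𝒜 j) : M) from rfl,
    fromPieces₂_apply]
  rfl

lemma tensorProduct_ext_homogeneous {N : Type} [AddCommGroup N] [Module R N]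
    {f g : M ⊗[R] M →ₗ[R] N}
    (h : ∀ i j : ℤ, ∀ x ∈ 𝒜 i, ∀ y ∈ 𝒜 j, f (x ⊗ₜ[R] y) = g (x ⊗ₜ[R] y)) : f = g := by
  refine TensorProduct.ext' fun x y => ?_
  induction x using DirectSum.Decomposition.inductionOn 𝒜 with
  | zero => simp
  | add x₁ x₂ h₁ h₂ => rw [add_tmul, map_add, map_add, h₁, h₂]
  | homogeneous m =>
    induction y using DirectSum.Decomposition.inductionOn 𝒜 with
    | zero => simp
    | add y₁ y₂ h₁ h₂ => rw [tmul_add, map_add, map_add, h₁, h₂]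
    | homogeneous n => exact h _ _ _ m.2 _ n.2

omit [DirectSum.Decomposition 𝒜] in
@[elab_as_elim]
lemma tgrade_induction {k : ℤ} {P : M ⊗[R] M → Prop} (h0 : P 0)
    (hadd : ∀ a b, P a → P b → P (a + b))
    (htmul : ∀ i j : ℤ, ∀ x ∈ 𝒜 i, ∀ y ∈ 𝒜 j, i + j = k → P (x ⊗ₜ[R] y))
    {v : M ⊗[R] M} (hv : v ∈ tgrade 𝒜 k) : P v := by
  refine Submodule.iSup_induction (motive := P) _ hv (fun i w hw => ?_) h0 hadd
  obtain ⟨t, rfl⟩ := hw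
  induction t with
  | zero => simpa using h0
  | tmul x y => simpa using htmul i (k - i) x x.2 y y.2 (by ring)
  | add a b ha hb => rw [map_add]; exact hadd _ _ ha hb

lemma map_signAction_of_mem_tgrade {a b k : ℤ} {v : M ⊗[R] M} (hv : v ∈ tgrade 𝒜 k) :
    TensorProduct.map (signAction 𝒜 a) (signAction 𝒜 b) v =
      ksign (b * k) • LinearMap.rTensor M (signAction 𝒜 (a + b)) v := by
  refine tgrade_induction 𝒜 ?_ (fun u w hu hw => ?_) (fun i j x hx y hy hij => ?_) hv
  · simp
  · rw [map_add, map_add, smul_add, hu, hw]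
  · rw [TensorProduct.map_tmul, LinearMap.rTensor_tmul, signAction_of_mem 𝒜 hx,
      signAction_of_mem 𝒜 hy, signAction_of_mem 𝒜 hx, zsmul_tmul, tmul_zsmul, zsmul_tmul,
      ksign_smul_ksign_smul, ksign_smul_ksign_smul]
    congr 1
    exact ksign_eq_of_even_sub ⟨-(b * i), by rw [← hij]; ring⟩

lemma cyc_tmul_of_mem_tgrade {k j : ℤ} {v : M ⊗[R] M} {y : M}
    (hv : v ∈ tgrade 𝒜 k) (hy : y ∈ 𝒜 j) :
    cyc 𝒜 (v ⊗ₜ[R] y) = ksign (k * j) • (TensorProduct.assoc R M M M).symm (y ⊗ₜ[R] v) := by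
  refine tgrade_induction 𝒜 ?_ (fun a b ha hb => ?_) (fun p q a ha b hb hpq => ?_) hv
  · simp only [zero_tmul, tmul_zero, map_zero, zsmul_zero]
  · rw [add_tmul, map_add, ha, hb, tmul_add, map_add, zsmul_add]
  · simp only [cyc, LinearMap.comp_apply, LinearEquiv.coe_coe, TensorProduct.assoc_tmul,
        LinearMap.lTensor_tmul, twist_tmul 𝒜 hb hy, tmul_zsmul, map_zsmul,
        TensorProduct.assoc_symm_tmul, LinearMap.rTensor_tmul, twist_tmul 𝒜 ha hy, zsmul_tmul,
        ksign_smul_ksign_smul, ← hpq]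
    ring_nf

lemma cyc_comp_rTensor {lam : M →ₗ[R] M ⊗[R] M} {dl : ℤ} (hl : IsHomogCoprod 𝒜 dl lam) :
    (cyc 𝒜).comp (LinearMap.rTensor M lam) =
      (TensorProduct.assoc R M M M).symm.toLinearMap.comp
        ((LinearMap.lTensor M lam).comp
          ((LinearMap.rTensor M (signAction 𝒜 dl)).comp (twist 𝒜))) := by
  refine tensorProduct_ext_homogeneous 𝒜 fun i j x hx y hy => ?_
  simp only [LinearMap.comp_apply, LinearEquiv.coe_coe, LinearMap.rTensor_tmul,
    cyc_tmul_of_mem_tgrade 𝒜 (hl i x hx) hy, twist_tmul 𝒜 hx hy, map_zsmul,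
    signAction_of_mem 𝒜 hy, zsmul_tmul, LinearMap.lTensor_tmul, ksign_smul_ksign_smul]
  ring_nf

/-- The operation `1 ⊗ μ ⊗ 1`, `(a ⊗ b) ⊗ (c ⊗ d) ↦ (-1)^{|μ||a|} (a ⊗ μ(b ⊗ c)) ⊗ d`;
thus `β = mulMid (c ⊗ c)`. -/
noncomputable def mulMid (mu : M ⊗[R] M →ₗ[R] M) (dm : ℤ) :
    (M ⊗[R] M) ⊗[R] (M ⊗[R] M) →ₗ[R] (M ⊗[R] M) ⊗[R] M :=
  (LinearMap.rTensor M (TensorProduct.map (signAction 𝒜 dm) mu)).comp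
    ((LinearMap.rTensor M (TensorProduct.assoc R M M M).toLinearMap).comp
      (TensorProduct.assoc R (M ⊗[R] M) M M).symm.toLinearMap)

lemma mulMid_tmul (mu : M ⊗[R] M →ₗ[R] M) (dm : ℤ) (x y : M) (z : M ⊗[R] M) :
    mulMid 𝒜 mu dm ((x ⊗ₜ[R] y) ⊗ₜ[R] z) =
      (TensorProduct.assoc R M M M).symm
        (signAction 𝒜 dm x ⊗ₜ[R]
          LinearMap.rTensor M mu ((TensorProduct.assoc R M M M).symm (y ⊗ₜ[R] z))) := by
  induction z with
  | zero => simp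
  | tmul u v => rfl
  | add a b ha hb => simp only [tmul_add, map_add, ha, hb]

namespace UnitalCoFrob

variable {𝒜} (U : UnitalCoFrob R 𝒜)

lemma cop_mem_tgrade : U.cop ∈ tgrade 𝒜 (U.dl - U.dm) := by
  rw [U.cop_def, sub_eq_neg_add]
  exact zsmul_mem (U.lam_homog _ U.unit U.unit_homog) _

lemma mulMid_cop_tmul (z : M ⊗[R] M) :
    mulMid 𝒜 U.mu U.dm (U.cop ⊗ₜ[R] z) = LinearMap.rTensor M U.lam z := by
  induction z with
  | zero => simp
  | tmul u v =>
    simp only [U.cofrob_left]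
    rfl
  | add a b ha hb => rw [tmul_add, map_add, map_add, ha, hb]

lemma rTensor_mu_assoc_symm_tmul_cop (y : M) :
    LinearMap.rTensor M U.mu ((TensorProduct.assoc R M M M).symm (y ⊗ₜ[R] U.cop)) =
      ksign U.dm • U.lam (signAction 𝒜 (U.dl - U.dm) y) := by
  simp only [U.cofrob_right, LinearMap.smul_apply, LinearMap.comp_apply, LinearEquiv.coe_coe,
    LinearMap.flip_apply, TensorProduct.mk_apply, signAction_signAction, smul_smul,
    ksign_mul_self, one_smul]

lemma mulMid_tmul_cop (w : M ⊗[R] M) :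
    mulMid 𝒜 U.mu U.dm (w ⊗ₜ[R] U.cop) =
      ksign U.dm • (TensorProduct.assoc R M M M).symm (LinearMap.lTensor M U.lam
        (TensorProduct.map (signAction 𝒜 U.dm) (signAction 𝒜 (U.dl - U.dm)) w)) := by
  induction w with
  | zero => simp only [zero_tmul, map_zero, zsmul_zero]
  | tmul x y =>
    rw [mulMid_tmul, rTensor_mu_assoc_symm_tmul_cop, tmul_zsmul, map_zsmul]
    rfl
  | add a b ha hb => rw [add_tmul, map_add, ha, hb, map_add, map_add, map_add, zsmul_add]

/-- Evaluating `(1 ⊗ μ ⊗ 1)(c ⊗ c)` through either coFrobenius relation. -/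
lemma rTensor_lam_cop :
    LinearMap.rTensor M U.lam U.cop =
      ksign U.dl • (TensorProduct.assoc R M M M).symm
        (LinearMap.lTensor M U.lam (LinearMap.rTensor M (signAction 𝒜 U.dl) U.cop)) := by
  rw [← mulMid_cop_tmul, mulMid_tmul_cop, map_signAction_of_mem_tgrade 𝒜 U.cop_mem_tgrade,
    map_zsmul, map_zsmul, ksign_self_mul, ksign_smul_ksign_smul, add_sub_cancel]

end UnitalCoFrob

theorem beta_S3_equivariant_general {R : Type} [CommRing R] {M : Type} [AddCommGroup M]
    [Module R M]
    (𝒜 : ℤ → Submodule R M) [DirectSum.Decomposition 𝒜]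
    (U : UnitalCoFrob R 𝒜)
    (hcocomm : (twist 𝒜).comp U.lam = ksign U.dl • U.lam) :
    -- τ₁₂ β = (-1)^{|λ|} β
    (LinearMap.rTensor M (twist 𝒜)
      (((LinearMap.rTensor M (TensorProduct.map (signAction 𝒜 U.dm) U.mu)).comp
        ((LinearMap.rTensor M (TensorProduct.assoc R M M M).toLinearMap).comp
          (TensorProduct.assoc R (M ⊗[R] M) M M).symm.toLinearMap))
        (U.cop ⊗ₜ[R] U.cop))
    = ksign U.dl • (((LinearMap.rTensor M (TensorProduct.map (signAction 𝒜 U.dm) U.mu)).comp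
        ((LinearMap.rTensor M (TensorProduct.assoc R M M M).toLinearMap).comp
          (TensorProduct.assoc R (M ⊗[R] M) M M).symm.toLinearMap))
        (U.cop ⊗ₜ[R] U.cop))) ∧
    -- σ β = β
    (cyc 𝒜 (((LinearMap.rTensor M (TensorProduct.map (signAction 𝒜 U.dm) U.mu)).comp
        ((LinearMap.rTensor M (TensorProduct.assoc R M M M).toLinearMap).comp
          (TensorProduct.assoc R (M ⊗[R] M) M M).symm.toLinearMap))
        (U.cop ⊗ₜ[R] U.cop))
    = ((LinearMap.rTensor M (TensorProduct.map (signAction 𝒜 U.dm) U.mu)).comp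
        ((LinearMap.rTensor M (TensorProduct.assoc R M M M).toLinearMap).comp
          (TensorProduct.assoc R (M ⊗[R] M) M M).symm.toLinearMap))
        (U.cop ⊗ₜ[R] U.cop)) := by
  show LinearMap.rTensor M (twist 𝒜) (mulMid 𝒜 U.mu U.dm (U.cop ⊗ₜ[R] U.cop)) =
      ksign U.dl • mulMid 𝒜 U.mu U.dm (U.cop ⊗ₜ[R] U.cop) ∧
    cyc 𝒜 (mulMid 𝒜 U.mu U.dm (U.cop ⊗ₜ[R] U.cop)) = mulMid 𝒜 U.mu U.dm (U.cop ⊗ₜ[R] U.cop)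
  rw [U.mulMid_cop_tmul]
  constructor
  · rw [← LinearMap.rTensor_comp_apply, hcocomm, ← Int.cast_smul_eq_zsmul R,
      LinearMap.rTensor_smul, LinearMap.smul_apply, Int.cast_smul_eq_zsmul]
  · rw [← LinearMap.comp_apply (cyc 𝒜), cyc_comp_rTensor 𝒜 U.lam_homog]
    simp only [LinearMap.comp_apply, LinearEquiv.coe_coe, U.cop_symm, map_zsmul]
    exact U.rTensor_lam_cop.symm

/-- If moreover `λ` is graded-cocommutative (`τλ = (-1)^{|λ|}λ`) in a unital
coFrobenius bialgebra, then `β = (1⊗μ⊗1)(c⊗c)` additionally satisfies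
`τ₁₂β = (-1)^{|λ|}β`; together with `σβ = β` this makes `β : R → A⊗A⊗A` equivariant for
the `S₃`-action, with the sign representation if `|λ|` is odd and the trivial
representation if `|λ|` is even. -/
theorem beta_S3_equivariant {R : Type} [CommRing R] {M : Type} [AddCommGroup M]
    [Module R M] [Module.Free R M] [Module.Finite R M]
    (𝒜 : ℤ → Submodule R M) [DirectSum.Decomposition 𝒜]
    (U : UnitalCoFrob R 𝒜)
    (hcocomm : (twist 𝒜).comp U.lam = ksign U.dl • U.lam) :
    -- τ₁₂ β = (-1)^{|λ|} β
    (LinearMap.rTensor M (twist 𝒜)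
      (((LinearMap.rTensor M (TensorProduct.map (signAction 𝒜 U.dm) U.mu)).comp
        ((LinearMap.rTensor M (TensorProduct.assoc R M M M).toLinearMap).comp
          (TensorProduct.assoc R (M ⊗[R] M) M M).symm.toLinearMap))
        (U.cop ⊗ₜ[R] U.cop))
    = ksign U.dl • (((LinearMap.rTensor M (TensorProduct.map (signAction 𝒜 U.dm) U.mu)).comp
        ((LinearMap.rTensor M (TensorProduct.assoc R M M M).toLinearMap).comp
          (TensorProduct.assoc R (M ⊗[R] M) M M).symm.toLinearMap))
        (U.cop ⊗ₜ[R] U.cop))) ∧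
    -- σ β = β
    (cyc 𝒜 (((LinearMap.rTensor M (TensorProduct.map (signAction 𝒜 U.dm) U.mu)).comp
        ((LinearMap.rTensor M (TensorProduct.assoc R M M M).toLinearMap).comp
          (TensorProduct.assoc R (M ⊗[R] M) M M).symm.toLinearMap))
        (U.cop ⊗ₜ[R] U.cop))
    = ((LinearMap.rTensor M (TensorProduct.map (signAction 𝒜 U.dm) U.mu)).comp
        ((LinearMap.rTensor M (TensorProduct.assoc R M M M).toLinearMap).comp
          (TensorProduct.assoc R (M ⊗[R] M) M M).symm.toLinearMap))
        (U.cop ⊗ₜ[R] U.cop)) :=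
  beta_S3_equivariant_general 𝒜 U hcocomm

end GradedCoFrob
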